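/- Let n ≥ 3 be an integer, U ⊆ ℝⁿ open, and ξ : U → ℝⁿ a C^∞ nowhere-vanishing vector field satisfying the conformal Killing equation for the flat Euclidean metric: ∂_A ξ_B + ∂_B ξ_A = (2/n)(Σ_C ∂_C ξ_C) δ_{AB} on U for all A, B. Define the symmetric 2-tensor field D_ξ on U by (D_ξ)_{AB} := |ξ|^{−(n+2)} ( ξ_A ξ_B − (|ξ|²/n) δ_{AB} ). Then D_ξ is transverse and traceless: Σ_A (D_ξ)_{AA} = 0 and Σ_A ∂_A (D_ξ)_{AB} = 0 on U for every B. -/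

import Mathlib

open scoped BigOperators

/-- Partial derivative `∂_A f` of a scalar function on `ℝ^n`. -/
noncomputable def pd {n : ℕ} (A : Fin n) (f : (Fin n → ℝ) → ℝ) (x : Fin n → ℝ) : ℝ :=
  fderiv ℝ f x (Pi.single A 1)

/-- The symmetric 2-tensor field
`(D_ξ)_{AB} = |ξ|^{−(n+2)} ( ξ_A ξ_B − (|ξ|²/n) δ_{AB} )` on flat `ℝⁿ`. -/
noncomputable def Dxi {n : ℕ} (ξ : (Fin n → ℝ) → (Fin n → ℝ)) (A B : Fin n)
    (x : Fin n → ℝ) : ℝ :=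
  ((Real.sqrt (∑ C, (ξ x C)^2)) ^ (n+2))⁻¹ *
    (ξ x A * ξ x B - ((∑ C, (ξ x C)^2) / (n : ℝ)) * (if A = B then (1:ℝ) else 0))

/-! Write `f = ξ ⬝ᵥ ξ`, `e = -(n+2)/2` and `P A C = ∂_A ξ_C`, so that
`D_{AB} = f^e (ξ_A ξ_B - f δ_{AB} / n)`, whose bracket is traceless, and `∂_A f = 2 (P ξ)_A`.
The conformal Killing equation reads `P + Pᵀ = (2/n) tr P • 1`; it gives
`ξ ᵥ* P = (2/n) tr P ξ - P ξ` and `ξ ⬝ᵥ P ξ = (tr P / n) f`. Substituting, the derivative of the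
bracket contributes `(n+2)/n · f^e (tr P ξ_B - (P ξ)_B)` to the divergence and the derivative of
the weight `f^e` contributes `2e/n` times the same quantity, and these cancel. -/

open Matrix

section Conformal

variable {ι R : Type*} [Fintype ι] [DecidableEq ι] [CommRing R] {P : Matrix ι ι R} {c : R}

theorem vecMul_eq_of_add_transpose_eq_smul_one (hP : P + Pᵀ = c • 1) (v : ι → R) :
    v ᵥ* P = c • v - P *ᵥ v := by
  rw [← mulVec_transpose, eq_sub_of_add_eq' hP, sub_mulVec, smul_mulVec, one_mulVec]

theorem two_mul_dotProduct_mulVec_of_add_transpose_eq_smul_one (hP : P + Pᵀ = c • 1)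
    (v : ι → R) : 2 * (v ⬝ᵥ P *ᵥ v) = c * (v ⬝ᵥ v) := by
  have hT : v ⬝ᵥ Pᵀ *ᵥ v = v ⬝ᵥ P *ᵥ v := by
    rw [mulVec_transpose, dotProduct_comm, dotProduct_mulVec]
  calc 2 * (v ⬝ᵥ P *ᵥ v) = v ⬝ᵥ (P + Pᵀ) *ᵥ v := by
        rw [add_mulVec, dotProduct_add, hT]; ring
    _ = c * (v ⬝ᵥ v) := by rw [hP, smul_mulVec, one_mulVec, dotProduct_smul, smul_eq_mul]

end Conformal

section PartialDerivative

variable {n : ℕ} {f g : (Fin n → ℝ) → ℝ} {x : Fin n → ℝ} (A : Fin n)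

theorem pd_mul (hf : DifferentiableAt ℝ f x) (hg : DifferentiableAt ℝ g x) :
    pd A (fun y => f y * g y) x = pd A f x * g x + f x * pd A g x := by
  simp [pd, fderiv_fun_mul hf hg]; ring

theorem pd_sub (hf : DifferentiableAt ℝ f x) (hg : DifferentiableAt ℝ g x) :
    pd A (fun y => f y - g y) x = pd A f x - pd A g x := by
  simp [pd, fderiv_fun_sub hf hg]

theorem pd_mul_const (hf : DifferentiableAt ℝ f x) (c : ℝ) :
    pd A (fun y => f y * c) x = pd A f x * c := by
  rw [pd, fderiv_mul_const hf, _root_.smul_apply, smul_eq_mul, mul_comm, pd]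

theorem pd_sum {ι : Type*} (s : Finset ι) {F : ι → (Fin n → ℝ) → ℝ}
    (hF : ∀ i ∈ s, DifferentiableAt ℝ (F i) x) :
    pd A (fun y => ∑ i ∈ s, F i y) x = ∑ i ∈ s, pd A (F i) x := by
  simp [pd, fderiv_fun_sum hF]

theorem pd_rpow_const (hf : DifferentiableAt ℝ f x) (hx : f x ≠ 0) (e : ℝ) :
    pd A (fun y => f y ^ e) x = e * f x ^ (e - 1) * pd A f x := by
  simp [pd, (hf.hasFDerivAt.rpow_const (p := e) (Or.inl hx)).fderiv]

end PartialDerivative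

-- Also true at `s = 0`, where both sides are junk zeros; so `Dxi_eq_rpow` holds everywhere.
theorem inv_sqrt_pow_eq_rpow_neg {s : ℝ} (hs : 0 ≤ s) (k : ℕ) :
    ((√s) ^ k)⁻¹ = s ^ (-(k : ℝ) / 2) := by
  rw [Real.sqrt_eq_rpow, ← Real.rpow_natCast, ← Real.rpow_mul hs, ← Real.rpow_neg hs]
  ring_nf

variable {n : ℕ}

-- Row `A` holds the `A`-th partial derivatives: this is the transpose of the Jacobian of `ξ`.
noncomputable def pdMatrix (ξ : (Fin n → ℝ) → (Fin n → ℝ)) (x : Fin n → ℝ) :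
    Matrix (Fin n) (Fin n) ℝ :=
  Matrix.of fun A C => pd A (fun y => ξ y C) x

theorem Dxi_eq_rpow (ξ : (Fin n → ℝ) → (Fin n → ℝ)) (A B : Fin n) :
    Dxi ξ A B = fun y => (ξ y ⬝ᵥ ξ y) ^ (-((n : ℝ) + 2) / 2) *
      (ξ y A * ξ y B - ξ y ⬝ᵥ ξ y * ((if A = B then 1 else 0) / n)) := by
  ext y
  have hsq : ∑ C, ξ y C ^ 2 = ξ y ⬝ᵥ ξ y := by simp [dotProduct, sq]
  rw [Dxi, hsq, inv_sqrt_pow_eq_rpow_neg (by simpa using dotProduct_star_self_nonneg (ξ y)),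
    div_mul_eq_mul_div]
  push_cast
  ring_nf

variable {ξ : (Fin n → ℝ) → (Fin n → ℝ)} {x : Fin n → ℝ}

theorem pd_dotProduct_self (hξ : ∀ C, DifferentiableAt ℝ (fun y => ξ y C) x) (A : Fin n) :
    pd A (fun y => ξ y ⬝ᵥ ξ y) x = 2 * (pdMatrix ξ x *ᵥ ξ x) A := by
  simp only [dotProduct]
  rw [pd_sum _ _ fun C _ => (hξ C).fun_mul (hξ C), mulVec, dotProduct, Finset.mul_sum]
  refine Finset.sum_congr rfl fun C _ => ?_
  rw [pd_mul _ (hξ C) (hξ C), pdMatrix, Matrix.of_apply]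
  ring

theorem pd_Dxi (hξ : ∀ C, DifferentiableAt ℝ (fun y => ξ y C) x) (hx : ξ x ≠ 0)
    (A A' B : Fin n) :
    pd A (fun y => Dxi ξ A' B y) x =
      (ξ x ⬝ᵥ ξ x) ^ (-((n : ℝ) + 2) / 2) *
          (pdMatrix ξ x A A' * ξ x B + ξ x A' * pdMatrix ξ x A B
            - 2 * (pdMatrix ξ x *ᵥ ξ x) A * ((if A' = B then 1 else 0) / n))
        + -((n : ℝ) + 2) / 2 * (ξ x ⬝ᵥ ξ x) ^ (-((n : ℝ) + 2) / 2 - 1)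
          * (2 * (pdMatrix ξ x *ᵥ ξ x) A)
          * (ξ x A' * ξ x B - ξ x ⬝ᵥ ξ x * ((if A' = B then 1 else 0) / n)) := by
  have hsq : DifferentiableAt ℝ (fun y => ξ y ⬝ᵥ ξ y) x :=
    DifferentiableAt.fun_sum fun C _ => (hξ C).fun_mul (hξ C)
  have hsq0 : ξ x ⬝ᵥ ξ x ≠ 0 := dotProduct_self_eq_zero.not.mpr hx
  simp only [Dxi_eq_rpow]
  rw [pd_mul _ (hsq.rpow_const (Or.inl hsq0)) (((hξ A').fun_mul (hξ B)).fun_sub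
      (hsq.mul_const _)), pd_rpow_const _ hsq hsq0, pd_sub _ ((hξ A').fun_mul (hξ B))
      (hsq.mul_const _), pd_mul _ (hξ A') (hξ B), pd_mul_const _ hsq, pd_dotProduct_self hξ]
  simp only [pdMatrix, Matrix.of_apply]
  ring

theorem sum_pd_Dxi (hξ : ∀ C, DifferentiableAt ℝ (fun y => ξ y C) x) (hx : ξ x ≠ 0)
    (B : Fin n) :
    ∑ A, pd A (fun y => Dxi ξ A B y) x =
      (ξ x ⬝ᵥ ξ x) ^ (-((n : ℝ) + 2) / 2) *
          ((pdMatrix ξ x).trace * ξ x B + (ξ x ᵥ* pdMatrix ξ x) B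
            - 2 / n * (pdMatrix ξ x *ᵥ ξ x) B)
        + -((n : ℝ) + 2) * (ξ x ⬝ᵥ ξ x) ^ (-((n : ℝ) + 2) / 2 - 1)
          * ((ξ x ⬝ᵥ pdMatrix ξ x *ᵥ ξ x) * ξ x B
            - ξ x ⬝ᵥ ξ x / n * (pdMatrix ξ x *ᵥ ξ x) B) := by
  set P := pdMatrix ξ x
  set v := ξ x
  set e : ℝ := -((n : ℝ) + 2) / 2
  set f := v ⬝ᵥ v
  have hδ : ∀ g : Fin n → ℝ, ∑ A, g A * (if A = B then 1 else 0) = g B := by simp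
  calc ∑ A, pd A (fun y => Dxi ξ A B y) x
      = ∑ A, (f ^ e * (P A A * v B) + f ^ e * (v A * P A B)
          - 2 / n * f ^ e * ((P *ᵥ v) A * (if A = B then 1 else 0))
          + 2 * e * f ^ (e - 1) * v B * (v A * (P *ᵥ v) A)
          - 2 * e * f ^ (e - 1) * (f / n) * ((P *ᵥ v) A * (if A = B then 1 else 0))) := by
        refine Finset.sum_congr rfl fun A _ => ?_
        rw [pd_Dxi hξ hx]
        ring
    _ = _ := by
        simp only [Finset.sum_add_distrib, Finset.sum_sub_distrib, ← Finset.mul_sum,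
          ← Finset.sum_mul, hδ]
        simp only [Matrix.trace, Matrix.diag, vecMul, dotProduct]
        ring

theorem sum_pd_Dxi_eq_zero (hξ : ∀ C, DifferentiableAt ℝ (fun y => ξ y C) x) (hx : ξ x ≠ 0)
    (hP : pdMatrix ξ x + (pdMatrix ξ x)ᵀ = (2 / n * (pdMatrix ξ x).trace) • 1) (B : Fin n) :
    ∑ A, pd A (fun y => Dxi ξ A B y) x = 0 := by
  have hn : (n : ℝ) ≠ 0 := by
    obtain ⟨C, -⟩ := Function.ne_iff.mp hx
    exact Nat.cast_ne_zero.mpr (Fin.pos C).ne'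
  have hf : ξ x ⬝ᵥ ξ x ≠ 0 := dotProduct_self_eq_zero.not.mpr hx
  rw [sum_pd_Dxi hξ hx, vecMul_eq_of_add_transpose_eq_smul_one hP, Pi.sub_apply, Pi.smul_apply,
    smul_eq_mul, Real.rpow_sub_one hf]
  have hquad :
      ξ x ⬝ᵥ pdMatrix ξ x *ᵥ ξ x = (pdMatrix ξ x).trace / n * (ξ x ⬝ᵥ ξ x) := by
    linear_combination two_mul_dotProduct_mulVec_of_add_transpose_eq_smul_one hP (ξ x) / 2
  rw [hquad]
  field_simp
  ring

theorem sum_Dxi_diag_eq_zero (ξ : (Fin n → ℝ) → (Fin n → ℝ)) (x : Fin n → ℝ) :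
    ∑ A, Dxi ξ A A x = 0 := by
  rcases Nat.eq_zero_or_pos n with rfl | hn
  · simp
  simp only [Dxi_eq_rpow, if_true, ← Finset.mul_sum, Finset.sum_sub_distrib, Finset.sum_const,
    Finset.card_univ, Fintype.card_fin, nsmul_eq_mul]
  rw [← dotProduct, mul_one_div_cancel (by positivity), mul_one, sub_self, mul_zero]

theorem statement11_general
    (n : ℕ)
    (U : Set (Fin n → ℝ)) (hU : IsOpen U)
    (ξ : (Fin n → ℝ) → (Fin n → ℝ))
    (hξC : ∀ A : Fin n, ContDiffOn ℝ (⊤ : ℕ∞) (fun x => ξ x A) U)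
    (hξ0 : ∀ x ∈ U, ξ x ≠ 0)
    (hCKV : ∀ x ∈ U, ∀ A B : Fin n,
      pd A (fun y => ξ y B) x + pd B (fun y => ξ y A) x
        = (2/(n : ℝ)) * (∑ C, pd C (fun y => ξ y C) x) * (if A = B then (1:ℝ) else 0)) :
    ∀ x ∈ U,
      (∑ A, Dxi ξ A A x = 0) ∧
      (∀ B : Fin n, ∑ A, pd A (fun y => Dxi ξ A B y) x = 0) := by
  intro x hx
  have hξ : ∀ C, DifferentiableAt ℝ (fun y => ξ y C) x := fun C =>
    ((hξC C).contDiffAt (hU.mem_nhds hx)).differentiableAt (by simp)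
  have hP : pdMatrix ξ x + (pdMatrix ξ x)ᵀ = (2 / n * (pdMatrix ξ x).trace) • 1 := by
    ext A B
    simpa [pdMatrix, Matrix.trace, Matrix.one_apply] using hCKV x hx A B
  exact ⟨sum_Dxi_diag_eq_zero ξ x, sum_pd_Dxi_eq_zero hξ (hξ0 x hx) hP⟩

/-- equation (4.24) of the paper.  For a smooth nowhere-vanishing
conformal Killing vector field `ξ` of the flat Euclidean metric on `U ⊆ ℝⁿ`, the tensor
`D_ξ` is transverse and traceless. -/
theorem statement11
    (n : ℕ) (hn : 3 ≤ n)
    (U : Set (Fin n → ℝ)) (hU : IsOpen U)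
    (ξ : (Fin n → ℝ) → (Fin n → ℝ))
    (hξC : ∀ A : Fin n, ContDiffOn ℝ (⊤ : ℕ∞) (fun x => ξ x A) U)
    (hξ0 : ∀ x ∈ U, ξ x ≠ 0)
    (hCKV : ∀ x ∈ U, ∀ A B : Fin n,
      pd A (fun y => ξ y B) x + pd B (fun y => ξ y A) x
        = (2/(n : ℝ)) * (∑ C, pd C (fun y => ξ y C) x) * (if A = B then (1:ℝ) else 0)) :
    ∀ x ∈ U,
      (∑ A, Dxi ξ A A x = 0) ∧
      (∀ B : Fin n, ∑ A, pd A (fun y => Dxi ξ A B y) x = 0) :=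
  statement11_general n U hU ξ hξC hξ0 hCKV
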